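/- arXiv:2501.03753 — 2 statements merged into one kernel-verified Lean document; each statement's English description precedes it below -/
import Mathlib

section
/- Unbiasedness transfers from Fixed-X to Same-X (Proposition 2(i)). Suppose Assumption 6 holds, and let U(𝕏,𝕐) be an unbiased estimator of OptF under the Fixed-X setting. Then U(𝕏,𝕐) is an unbiased estimator of OptS under the Same-X setting, and consequently the estimator Tr(𝕏,𝕐) + U(𝕏,𝕐) is simultaneously an unbiased estimator of ErrF under the Fixed-X setting and of ErrS under the Same-X setting; that is, the unbiased estimator of the expected test error is the same under the Fixed-X and Same-X settings. -/
/-!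
Under the Same-X setting the errors are independent of the design, so conditioning on
`X = x` turns every Same-X expectation into the corresponding Fixed-X expectation at the
design `x`, and the Same-X expectation is the average of these over the law of `X`.
Averaging the Fixed-X identity `E[U] = ErrF - E[Tr]` over the design gives the Same-X
identity; the statements about `Tr + U` follow by linearity.
-/

open MeasureTheory Matrix ProbabilityTheory
open scoped BigOperators

noncomputable section

/-- `vec(y yᵀ)`, the vectorized outer product of a vector with itself. -/
def vecOuter {p : ℕ} (y : Fin p → ℝ) : Fin p × Fin p → ℝ := fun ab => y ab.1 * y ab.2

/-- The weighted squared-error loss `L(y, c) = (y - c)ᵀ W (y - c)`. -/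
def wLoss {p : ℕ} (Wm : Matrix (Fin p × Fin p) (Fin p × Fin p) ℝ)
    (y c : Fin p × Fin p → ℝ) : ℝ := (y - c) ⬝ᵥ Wm.mulVec (y - c)

/-- The average loss `(1/n) Σᵢ L(vec(yᵢyᵢᵀ), ĉ(xᵢ))` of a fitted covariance function `ĉ`
over data `(xᵢ, yᵢ), i = 1, …, n`; both the training error and the test error have
this form. -/
def avgLoss {𝒳 : Type*} {p n : ℕ} (W : 𝒳 → Matrix (Fin p × Fin p) (Fin p × Fin p) ℝ)
    (xs : Fin n → 𝒳) (ys : Fin n → Fin p → ℝ) (chat : 𝒳 → Fin p × Fin p → ℝ) : ℝ :=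
  (1 / (n:ℝ)) * ∑ i, wLoss (W (xs i)) (vecOuter (ys i)) (chat (xs i))

namespace ProbabilityTheory

variable {Ω A B G : Type*} [MeasurableSpace Ω] [MeasurableSpace A] [MeasurableSpace B]
  [NormedAddCommGroup G] [NormedSpace ℝ G] {μ : Measure Ω} [IsFiniteMeasure μ]
  {E : Ω → A} {Xf : Ω → B}

theorem IndepFun.integral_comp_eq_integral_integral (hind : IndepFun E Xf μ)
    (hE : Measurable E) (hX : Measurable Xf) {g : A × B → G} (hg : StronglyMeasurable g)
    (hint : Integrable (fun ω => g (E ω, Xf ω)) μ) :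
    ∫ ω, g (E ω, Xf ω) ∂μ = ∫ b, ∫ ω, g (E ω, b) ∂μ ∂(μ.map Xf) := by
  have hpair : Measurable fun ω => (E ω, Xf ω) := hE.prodMk hX
  have hmap : μ.map (fun ω => (E ω, Xf ω)) = (μ.map E).prod (μ.map Xf) :=
    (indepFun_iff_map_prod_eq_prod_map_map hE.aemeasurable hX.aemeasurable).mp hind
  have hint_prod : Integrable g ((μ.map E).prod (μ.map Xf)) := by
    rwa [← hmap, integrable_map_measure hg.aestronglyMeasurable hpair.aemeasurable]
  calc ∫ ω, g (E ω, Xf ω) ∂μ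
      = ∫ z, g z ∂((μ.map E).prod (μ.map Xf)) := by
        rw [← hmap, integral_map hpair.aemeasurable hg.aestronglyMeasurable]
    _ = ∫ b, ∫ a, g (a, b) ∂(μ.map E) ∂(μ.map Xf) := integral_prod_symm g hint_prod
    _ = ∫ b, ∫ ω, g (E ω, b) ∂μ ∂(μ.map Xf) := by
        congr with b
        exact integral_map hE.aemeasurable
          (hg.comp_measurable (measurable_id.prodMk measurable_const)).aestronglyMeasurable

theorem IndepFun.integral_comp_eq_of_forall (hind : IndepFun E Xf μ)
    (hE : Measurable E) (hX : Measurable Xf) {g h : A × B → G}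
    (hg : StronglyMeasurable g) (hh : StronglyMeasurable h)
    (hgi : Integrable (fun ω => g (E ω, Xf ω)) μ) (hhi : Integrable (fun ω => h (E ω, Xf ω)) μ)
    (heq : ∀ b, ∫ ω, g (E ω, b) ∂μ = ∫ ω, h (E ω, b) ∂μ) :
    ∫ ω, g (E ω, Xf ω) ∂μ = ∫ ω, h (E ω, Xf ω) ∂μ := by
  simp only [hind.integral_comp_eq_integral_integral hE hX hg hgi,
    hind.integral_comp_eq_integral_integral hE hX hh hhi, heq]

end ProbabilityTheory

theorem integral_add_eq_of_integral_eq_sub {Ω G : Type*} [MeasurableSpace Ω]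
    [NormedAddCommGroup G] [NormedSpace ℝ G] {μ : Measure Ω} {tr u err : Ω → G}
    (htr : Integrable tr μ) (hu : Integrable u μ)
    (h : ∫ ω, u ω ∂μ = ∫ ω, err ω ∂μ - ∫ ω, tr ω ∂μ) :
    ∫ ω, (tr ω + u ω) ∂μ = ∫ ω, err ω ∂μ := by
  rw [integral_add htr hu, h, add_sub_cancel]

section

variable {𝒳 : Type*} [MeasurableSpace 𝒳] {n p : ℕ}

/-- `e (α, j)` plays the role of `ε_{αj}`; `s = Sum.inl` selects the training responses and
`s = Sum.inr` the test responses. -/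
def responses (Csqrt : 𝒳 → Matrix (Fin p) (Fin p) ℝ) (s : Fin n → Fin n ⊕ Fin n)
    (x : Fin n → 𝒳) (e : (Fin n ⊕ Fin n) × Fin p → ℝ) : Fin n → Fin p → ℝ :=
  fun i => (Csqrt (x i)).mulVec fun k => e (s i, k)

theorem measurable_responses {Csqrt : 𝒳 → Matrix (Fin p) (Fin p) ℝ}
    (hC : ∀ a b, Measurable fun t => Csqrt t a b) (s : Fin n → Fin n ⊕ Fin n) :
    Measurable fun q : ((Fin n ⊕ Fin n) × Fin p → ℝ) × (Fin n → 𝒳) =>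
      responses Csqrt s q.2 q.1 := by
  unfold responses Matrix.mulVec dotProduct
  fun_prop

theorem measurable_wLoss {β : Type*} [MeasurableSpace β]
    {Wm : β → Matrix (Fin p × Fin p) (Fin p × Fin p) ℝ} {y c : β → Fin p × Fin p → ℝ}
    (hWm : ∀ ab cd, Measurable fun b => Wm b ab cd) (hy : Measurable y) (hc : Measurable c) :
    Measurable fun b => wLoss (Wm b) (y b) (c b) := by
  unfold wLoss Matrix.mulVec dotProduct
  fun_prop

theorem measurable_avgLoss {β : Type*} [MeasurableSpace β]
    {W : 𝒳 → Matrix (Fin p × Fin p) (Fin p × Fin p) ℝ}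
    (hW : ∀ ab cd, Measurable fun t => W t ab cd)
    {xs : β → Fin n → 𝒳} {ys : β → Fin n → Fin p → ℝ} {c : β → 𝒳 → Fin p × Fin p → ℝ}
    (hxs : Measurable xs) (hys : Measurable ys) (hc : ∀ i, Measurable fun b => c b (xs b i)) :
    Measurable fun b => avgLoss W (xs b) (ys b) (c b) := by
  unfold avgLoss
  refine measurable_const.mul (Finset.measurable_sum _ fun i _ => measurable_wLoss ?_ ?_ (hc i))
  · exact fun ab cd => (hW ab cd).comp (measurable_pi_apply i |>.comp hxs)
  · unfold vecOuter
    fun_prop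

end


theorem unbiasedness_transfers_fixedX_to_sameX_general
    -- probability space
    {Ω : Type*} [MeasurableSpace Ω] (μ : Measure Ω) [IsProbabilityMeasure μ]
    -- dimensions
    (n p : ℕ)
    -- space of explanatory variables
    {𝒳 : Type*} [MeasurableSpace 𝒳]
    -- the true covariance function `C(·)` and its symmetric square root `C^{1/2}(·)`
    (Csqrt : 𝒳 → Matrix (Fin p) (Fin p) ℝ)
    (hCmeas : ∀ a b, Measurable fun t => Csqrt t a b)
    -- the weight matrices `W(·)` (positive semidefinite)
    (W : 𝒳 → Matrix (Fin p × Fin p) (Fin p × Fin p) ℝ)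
    (hWmeas : ∀ ab cd, Measurable fun t => W t ab cd)
    -- Assumption 6: the errors for the training (`inl`) and test (`inr`) responses;
    -- entries i.i.d. in both indices, independent of the X's, mean 0, variance 1,
    -- fourth moment μ⁴ and finite (4+η₁)-th absolute moment
    (ε : (Fin n ⊕ Fin n) → Ω → Fin p → ℝ)
    (hεmeas : ∀ α j, Measurable fun ω => ε α ω j)
    -- Same-X setting: i.i.d. training explanatory variables, independent of the errors;
    -- the test explanatory variables are the same
    (X : Fin n → Ω → 𝒳)
    (hXmeas : ∀ i, Measurable (X i))
    (hεXindep : IndepFun (fun ω (q : (Fin n ⊕ Fin n) × Fin p) => ε q.1 ω q.2)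
      (fun ω (i : Fin n) => X i ω) μ)
    -- the fitted (vectorized) covariance function `Ĉ(·)`, estimated from the training data
    (Chat : (Fin n → 𝒳) → (Fin n → Fin p → ℝ) → 𝒳 → (Fin p × Fin p → ℝ))
    (hChatMeas : ∀ ab, Measurable fun q : (Fin n → 𝒳) × (Fin n → Fin p → ℝ) × 𝒳 =>
      Chat q.1 q.2.1 q.2.2 ab)
    -- the estimator `U(𝕏, 𝕐)` of the optimism, and its measurability
    (U : (Fin n → 𝒳) → (Fin n → Fin p → ℝ) → ℝ)
    (hUmeas : Measurable fun q : (Fin n → 𝒳) × (Fin n → Fin p → ℝ) => U q.1 q.2)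
    -- integrability, under the Fixed-X setting for every design and under the Same-X setting
    (hIntF : ∀ x : Fin n → 𝒳,
      Integrable (fun ω => avgLoss W x (fun i => (Csqrt (x i)).mulVec (ε (Sum.inl i) ω))
          (Chat x (fun j => (Csqrt (x j)).mulVec (ε (Sum.inl j) ω)))) μ ∧
      Integrable (fun ω => avgLoss W x (fun i => (Csqrt (x i)).mulVec (ε (Sum.inr i) ω))
          (Chat x (fun j => (Csqrt (x j)).mulVec (ε (Sum.inl j) ω)))) μ ∧
      Integrable (fun ω => U x (fun i => (Csqrt (x i)).mulVec (ε (Sum.inl i) ω))) μ)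
    (hIntS :
      Integrable (fun ω => avgLoss W (fun i => X i ω)
          (fun i => (Csqrt (X i ω)).mulVec (ε (Sum.inl i) ω))
          (Chat (fun j => X j ω) (fun j => (Csqrt (X j ω)).mulVec (ε (Sum.inl j) ω)))) μ ∧
      Integrable (fun ω => avgLoss W (fun i => X i ω)
          (fun i => (Csqrt (X i ω)).mulVec (ε (Sum.inr i) ω))
          (Chat (fun j => X j ω) (fun j => (Csqrt (X j ω)).mulVec (ε (Sum.inl j) ω)))) μ ∧
      Integrable (fun ω => U (fun i => X i ω)
          (fun i => (Csqrt (X i ω)).mulVec (ε (Sum.inl i) ω))) μ)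
    -- hypothesis: `U` is an unbiased estimator of `OptF = ErrF − E[Tr]` under the Fixed-X
    -- setting, for every fixed design `x = (x₁, …, xₙ)`
    (hU : ∀ x : Fin n → 𝒳,
      (∫ ω, U x (fun i => (Csqrt (x i)).mulVec (ε (Sum.inl i) ω)) ∂μ)
        =
      (∫ ω, avgLoss W x (fun i => (Csqrt (x i)).mulVec (ε (Sum.inr i) ω))
          (Chat x (fun j => (Csqrt (x j)).mulVec (ε (Sum.inl j) ω))) ∂μ)
      - (∫ ω, avgLoss W x (fun i => (Csqrt (x i)).mulVec (ε (Sum.inl i) ω))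
          (Chat x (fun j => (Csqrt (x j)).mulVec (ε (Sum.inl j) ω))) ∂μ)) :
    -- (a)  `U` is an unbiased estimator of `OptS = ErrS − E[Tr]` under the Same-X setting;
    ((∫ ω, U (fun i => X i ω) (fun i => (Csqrt (X i ω)).mulVec (ε (Sum.inl i) ω)) ∂μ)
        =
      (∫ ω, avgLoss W (fun i => X i ω) (fun i => (Csqrt (X i ω)).mulVec (ε (Sum.inr i) ω))
          (Chat (fun j => X j ω) (fun j => (Csqrt (X j ω)).mulVec (ε (Sum.inl j) ω))) ∂μ)
      - (∫ ω, avgLoss W (fun i => X i ω) (fun i => (Csqrt (X i ω)).mulVec (ε (Sum.inl i) ω))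
          (Chat (fun j => X j ω) (fun j => (Csqrt (X j ω)).mulVec (ε (Sum.inl j) ω))) ∂μ))
    ∧
    -- (b)  `Tr + U` is an unbiased estimator of `ErrF` under the Fixed-X setting, for
    -- every fixed design;
    (∀ x : Fin n → 𝒳,
      (∫ ω, (avgLoss W x (fun i => (Csqrt (x i)).mulVec (ε (Sum.inl i) ω))
            (Chat x (fun j => (Csqrt (x j)).mulVec (ε (Sum.inl j) ω)))
          + U x (fun i => (Csqrt (x i)).mulVec (ε (Sum.inl i) ω))) ∂μ)
        =
      (∫ ω, avgLoss W x (fun i => (Csqrt (x i)).mulVec (ε (Sum.inr i) ω))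
          (Chat x (fun j => (Csqrt (x j)).mulVec (ε (Sum.inl j) ω))) ∂μ))
    ∧
    -- (c)  the same estimator `Tr + U` is an unbiased estimator of `ErrS` under the
    -- Same-X setting
    ((∫ ω, (avgLoss W (fun i => X i ω) (fun i => (Csqrt (X i ω)).mulVec (ε (Sum.inl i) ω))
            (Chat (fun j => X j ω) (fun j => (Csqrt (X j ω)).mulVec (ε (Sum.inl j) ω)))
          + U (fun i => X i ω) (fun i => (Csqrt (X i ω)).mulVec (ε (Sum.inl i) ω))) ∂μ)
        =
      (∫ ω, avgLoss W (fun i => X i ω) (fun i => (Csqrt (X i ω)).mulVec (ε (Sum.inr i) ω))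
          (Chat (fun j => X j ω) (fun j => (Csqrt (X j ω)).mulVec (ε (Sum.inl j) ω))) ∂μ)) := by
  have hE : Measurable fun ω (q : (Fin n ⊕ Fin n) × Fin p) => ε q.1 ω q.2 :=
    measurable_pi_lambda _ fun q => hεmeas q.1 q.2
  have hXf : Measurable fun ω (i : Fin n) => X i ω := measurable_pi_lambda _ hXmeas
  have hYtrain := measurable_responses hCmeas (n := n) Sum.inl
  have hChat : ∀ i, Measurable fun q : ((Fin n ⊕ Fin n) × Fin p → ℝ) × (Fin n → 𝒳) =>
      Chat q.2 (responses Csqrt Sum.inl q.2 q.1) (q.2 i) := fun i =>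
    measurable_pi_lambda _ fun ab => (hChatMeas ab).comp
      (measurable_snd.prodMk (hYtrain.prodMk ((measurable_pi_apply i).comp measurable_snd)))
  have hTr := measurable_avgLoss hWmeas measurable_snd hYtrain hChat
  have hTe := measurable_avgLoss hWmeas measurable_snd (measurable_responses hCmeas Sum.inr) hChat
  have hOptS := (hεXindep.integral_comp_eq_of_forall hE hXf
      (hUmeas.comp (measurable_snd.prodMk hYtrain)).stronglyMeasurable
      (hTe.sub hTr).stronglyMeasurable hIntS.2.2 (hIntS.2.1.sub hIntS.1)
      fun x => (hU x).trans (integral_sub (hIntF x).2.1 (hIntF x).1).symm).trans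
    (integral_sub hIntS.2.1 hIntS.1)
  exact ⟨hOptS, fun x => integral_add_eq_of_integral_eq_sub (hIntF x).1 (hIntF x).2.2 (hU x),
    integral_add_eq_of_integral_eq_sub hIntS.1 hIntS.2.2 hOptS⟩

theorem unbiasedness_transfers_fixedX_to_sameX
    -- probability space
    {Ω : Type*} [MeasurableSpace Ω] (μ : Measure Ω) [IsProbabilityMeasure μ]
    -- dimensions
    (n p : ℕ) (hn : 0 < n)
    -- space of explanatory variables
    {𝒳 : Type*} [MeasurableSpace 𝒳]
    -- the true covariance function `C(·)` and its symmetric square root `C^{1/2}(·)`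
    (C Csqrt : 𝒳 → Matrix (Fin p) (Fin p) ℝ)
    (hCsqrt : ∀ t, (Csqrt t).IsSymm ∧ Csqrt t * Csqrt t = C t)
    (hCmeas : ∀ a b, Measurable fun t => Csqrt t a b)
    -- the weight matrices `W(·)` (positive semidefinite)
    (W : 𝒳 → Matrix (Fin p × Fin p) (Fin p × Fin p) ℝ)
    (hWpsd : ∀ t, (W t).PosSemidef)
    (hWmeas : ∀ ab cd, Measurable fun t => W t ab cd)
    -- Assumption 6: the errors for the training (`inl`) and test (`inr`) responses;
    -- entries i.i.d. in both indices, independent of the X's, mean 0, variance 1,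
    -- fourth moment μ⁴ and finite (4+η₁)-th absolute moment
    (ε : (Fin n ⊕ Fin n) → Ω → Fin p → ℝ)
    (hεmeas : ∀ α j, Measurable fun ω => ε α ω j)
    (hεindep : iIndepFun (m := fun _ : (Fin n ⊕ Fin n) × Fin p => (inferInstance : MeasurableSpace ℝ))
      (fun q ω => ε q.1 ω q.2) μ)
    (hεident : ∀ q q' : (Fin n ⊕ Fin n) × Fin p,
      IdentDistrib (fun ω => ε q.1 ω q.2) (fun ω => ε q'.1 ω q'.2) μ μ)
    (hεmean : ∀ α j, ∫ ω, ε α ω j ∂μ = 0)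
    (hεvar : ∀ α j, ∫ ω, (ε α ω j) ^ 2 ∂μ = 1)
    (μ4 : ℝ) (hεmom4 : ∀ α j, ∫ ω, (ε α ω j) ^ 4 ∂μ = μ4)
    (hεmom : ∃ η₁ > (0:ℝ), ∀ α j, Integrable (fun ω => |ε α ω j| ^ (4 + η₁)) μ)
    -- Same-X setting: i.i.d. training explanatory variables, independent of the errors;
    -- the test explanatory variables are the same
    (X : Fin n → Ω → 𝒳)
    (hXmeas : ∀ i, Measurable (X i))
    (hXindep : iIndepFun (m := fun _ : Fin n => (inferInstance : MeasurableSpace 𝒳)) X μ)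
    (hXident : ∀ i i', IdentDistrib (X i) (X i') μ μ)
    (hεXindep : IndepFun (fun ω (q : (Fin n ⊕ Fin n) × Fin p) => ε q.1 ω q.2)
      (fun ω (i : Fin n) => X i ω) μ)
    -- the fitted (vectorized) covariance function `Ĉ(·)`, estimated from the training data
    (Chat : (Fin n → 𝒳) → (Fin n → Fin p → ℝ) → 𝒳 → (Fin p × Fin p → ℝ))
    (hChatMeas : ∀ ab, Measurable fun q : (Fin n → 𝒳) × (Fin n → Fin p → ℝ) × 𝒳 =>
      Chat q.1 q.2.1 q.2.2 ab)
    -- the estimator `U(𝕏, 𝕐)` of the optimism, and its measurability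
    (U : (Fin n → 𝒳) → (Fin n → Fin p → ℝ) → ℝ)
    (hUmeas : Measurable fun q : (Fin n → 𝒳) × (Fin n → Fin p → ℝ) => U q.1 q.2)
    -- integrability, under the Fixed-X setting for every design and under the Same-X setting
    (hIntF : ∀ x : Fin n → 𝒳,
      Integrable (fun ω => avgLoss W x (fun i => (Csqrt (x i)).mulVec (ε (Sum.inl i) ω))
          (Chat x (fun j => (Csqrt (x j)).mulVec (ε (Sum.inl j) ω)))) μ ∧
      Integrable (fun ω => avgLoss W x (fun i => (Csqrt (x i)).mulVec (ε (Sum.inr i) ω))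
          (Chat x (fun j => (Csqrt (x j)).mulVec (ε (Sum.inl j) ω)))) μ ∧
      Integrable (fun ω => U x (fun i => (Csqrt (x i)).mulVec (ε (Sum.inl i) ω))) μ)
    (hIntS :
      Integrable (fun ω => avgLoss W (fun i => X i ω)
          (fun i => (Csqrt (X i ω)).mulVec (ε (Sum.inl i) ω))
          (Chat (fun j => X j ω) (fun j => (Csqrt (X j ω)).mulVec (ε (Sum.inl j) ω)))) μ ∧
      Integrable (fun ω => avgLoss W (fun i => X i ω)
          (fun i => (Csqrt (X i ω)).mulVec (ε (Sum.inr i) ω))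
          (Chat (fun j => X j ω) (fun j => (Csqrt (X j ω)).mulVec (ε (Sum.inl j) ω)))) μ ∧
      Integrable (fun ω => U (fun i => X i ω)
          (fun i => (Csqrt (X i ω)).mulVec (ε (Sum.inl i) ω))) μ)
    -- hypothesis: `U` is an unbiased estimator of `OptF = ErrF − E[Tr]` under the Fixed-X
    -- setting, for every fixed design `x = (x₁, …, xₙ)`
    (hU : ∀ x : Fin n → 𝒳,
      (∫ ω, U x (fun i => (Csqrt (x i)).mulVec (ε (Sum.inl i) ω)) ∂μ)
        =
      (∫ ω, avgLoss W x (fun i => (Csqrt (x i)).mulVec (ε (Sum.inr i) ω))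
          (Chat x (fun j => (Csqrt (x j)).mulVec (ε (Sum.inl j) ω))) ∂μ)
      - (∫ ω, avgLoss W x (fun i => (Csqrt (x i)).mulVec (ε (Sum.inl i) ω))
          (Chat x (fun j => (Csqrt (x j)).mulVec (ε (Sum.inl j) ω))) ∂μ)) :
    -- (a)  `U` is an unbiased estimator of `OptS = ErrS − E[Tr]` under the Same-X setting;
    ((∫ ω, U (fun i => X i ω) (fun i => (Csqrt (X i ω)).mulVec (ε (Sum.inl i) ω)) ∂μ)
        =
      (∫ ω, avgLoss W (fun i => X i ω) (fun i => (Csqrt (X i ω)).mulVec (ε (Sum.inr i) ω))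
          (Chat (fun j => X j ω) (fun j => (Csqrt (X j ω)).mulVec (ε (Sum.inl j) ω))) ∂μ)
      - (∫ ω, avgLoss W (fun i => X i ω) (fun i => (Csqrt (X i ω)).mulVec (ε (Sum.inl i) ω))
          (Chat (fun j => X j ω) (fun j => (Csqrt (X j ω)).mulVec (ε (Sum.inl j) ω))) ∂μ))
    ∧
    -- (b)  `Tr + U` is an unbiased estimator of `ErrF` under the Fixed-X setting, for
    -- every fixed design;
    (∀ x : Fin n → 𝒳,
      (∫ ω, (avgLoss W x (fun i => (Csqrt (x i)).mulVec (ε (Sum.inl i) ω))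
            (Chat x (fun j => (Csqrt (x j)).mulVec (ε (Sum.inl j) ω)))
          + U x (fun i => (Csqrt (x i)).mulVec (ε (Sum.inl i) ω))) ∂μ)
        =
      (∫ ω, avgLoss W x (fun i => (Csqrt (x i)).mulVec (ε (Sum.inr i) ω))
          (Chat x (fun j => (Csqrt (x j)).mulVec (ε (Sum.inl j) ω))) ∂μ))
    ∧
    -- (c)  the same estimator `Tr + U` is an unbiased estimator of `ErrS` under the
    -- Same-X setting
    ((∫ ω, (avgLoss W (fun i => X i ω) (fun i => (Csqrt (X i ω)).mulVec (ε (Sum.inl i) ω))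
            (Chat (fun j => X j ω) (fun j => (Csqrt (X j ω)).mulVec (ε (Sum.inl j) ω)))
          + U (fun i => X i ω) (fun i => (Csqrt (X i ω)).mulVec (ε (Sum.inl i) ω))) ∂μ)
        =
      (∫ ω, avgLoss W (fun i => X i ω) (fun i => (Csqrt (X i ω)).mulVec (ε (Sum.inr i) ω))
          (Chat (fun j => X j ω) (fun j => (Csqrt (X j ω)).mulVec (ε (Sum.inl j) ω))) ∂μ)) :=
  unbiasedness_transfers_fixedX_to_sameX_general μ n p Csqrt hCmeas W hWmeas ε hεmeas X hXmeas
    hεXindep Chat hChatMeas U hUmeas hIntF hIntS hU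
end
end

section
/- Optimism of the WLS fit of a linear covariance regression under the Fixed-X setting (Proposition 3, first part). Suppose Assumption 6 holds, and fit the linear covariance regression model C_β(X) = Σ_{k=1}^K β^{(k)} X^{(k)} by the weighted least squares estimator β̂_WLS = (Σ_{i=1}^n 𝐗_iᵀW(X_i)𝐗_i)^{-1} Σ_{i=1}^n 𝐗_iᵀW(X_i)𝐘_i. Then, under the Fixed-X setting, OptF = (2/n) tr{(x̃ᵀx̃)^{-1} x̃ᵀ Ṽ(x) x̃}. -/
/-!
Proposition 3 (first part) of "Fixed and Random Covariance Regression Analyses":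
the optimism of the WLS fit of a linear covariance regression model under the
Fixed-X setting is `OptF = (2/n) tr{(x̃ᵀx̃)⁻¹ x̃ᵀ Ṽ(x) x̃}`.
-/

open MeasureTheory Matrix ProbabilityTheory
open scoped BigOperators

noncomputable section

/-- Expectation of a real random variable. -/
def expVal {Ω : Type*} [MeasurableSpace Ω] (μ : Measure Ω) (f : Ω → ℝ) : ℝ := ∫ ω, f ω ∂μ

/-- Covariance of two real random variables. -/
def covVal {Ω : Type*} [MeasurableSpace Ω] (μ : Measure Ω) (f g : Ω → ℝ) : ℝ :=
  ∫ ω, (f ω - expVal μ f) * (g ω - expVal μ g) ∂μ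

/-- The `p² × K` design matrix `𝐗 = (vec X⁽¹⁾, …, vec X⁽ᴷ⁾)` built from the explanatory
matrices `X⁽¹⁾, …, X⁽ᴷ⁾`. -/
def designM {p K : ℕ} (t : Fin K → Matrix (Fin p) (Fin p) ℝ) :
    Matrix (Fin p × Fin p) (Fin K) ℝ := Matrix.of fun ab k => t k ab.1 ab.2

/-- The weighted least squares estimator
`β̂_WLS = (Σᵢ 𝐗ᵢᵀ W(Xᵢ) 𝐗ᵢ)⁻¹ Σᵢ 𝐗ᵢᵀ W(Xᵢ) 𝐘ᵢ` for the linear covariance regression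
model `C_β(X) = Σₖ β⁽ᵏ⁾ X⁽ᵏ⁾`. -/
def betaWLS {p K n : ℕ}
    (W : (Fin K → Matrix (Fin p) (Fin p) ℝ) → Matrix (Fin p × Fin p) (Fin p × Fin p) ℝ)
    (tX : Fin n → (Fin K → Matrix (Fin p) (Fin p) ℝ)) (tY : Fin n → Fin p → ℝ) :
    Fin K → ℝ :=
  (∑ i, (designM (tX i))ᵀ * W (tX i) * designM (tX i))⁻¹.mulVec
    (∑ i, ((designM (tX i))ᵀ * W (tX i)).mulVec (vecOuter (tY i)))

/-!
The WLS fit at `xᵢ` is linear in the training responses: `Ĉᵢ = Σⱼ Hᵢⱼ 𝐘ⱼ` with hat blocks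
`Hᵢⱼ = 𝐱ᵢ (Σₖ 𝐱ₖᵀ W(xₖ) 𝐱ₖ)⁻¹ 𝐱ⱼᵀ W(xⱼ)`. For symmetric `W` the test and training losses at `xᵢ`
differ by `𝐘₀ᵢᵀ W 𝐘₀ᵢ - 𝐘ᵢᵀ W 𝐘ᵢ - 2 (𝐘₀ᵢ - 𝐘ᵢ)ᵀ W Ĉᵢ`. Since `𝐘₀ᵢ` and `𝐘ᵢ` are identically
distributed, the first two terms have equal expectations, and in
`E[uᵀ A v] = E[u]ᵀ A E[v] + tr(A Cov(v, u))` the mean parts of the cross term cancel. Independence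
kills every covariance except `Cov(𝐘ᵢ, 𝐘ᵢ) = 𝐕(xᵢ)`, so the optimism at `xᵢ` is
`2 tr(W(xᵢ) Hᵢᵢ 𝐕(xᵢ))`; a cyclic permutation of the trace turns the average of these into
`(2/n) tr{(x̃ᵀx̃)⁻¹ x̃ᵀ Ṽ(x) x̃}`.
-/

section LinearAlgebra

variable {ι κ : Type*} [Fintype ι]

lemma dotProduct_mulVec_comm {A : Matrix ι ι ℝ} (hA : Aᵀ = A) (u v : ι → ℝ) :
    u ⬝ᵥ A *ᵥ v = v ⬝ᵥ A *ᵥ u := by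
  rw [dotProduct_mulVec, dotProduct_comm, ← vecMul_transpose, hA]

lemma sub_dotProduct_mulVec_sum [Fintype κ] {J : Type*} [Fintype J] (y₀ y : ι → ℝ)
    (A : Matrix ι ι ℝ) (B : J → Matrix ι κ ℝ) (z : J → κ → ℝ) :
    (y₀ - y) ⬝ᵥ A *ᵥ ∑ j, B j *ᵥ z j
      = ∑ j, (y₀ ⬝ᵥ (A * B j) *ᵥ z j - y ⬝ᵥ (A * B j) *ᵥ z j) := by
  simp only [mulVec_sum, mulVec_mulVec, dotProduct_sum, sub_dotProduct, Finset.sum_sub_distrib]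

lemma transpose_mul_self_of_transpose_eq {S : Matrix ι ι ℝ} (hS : Sᵀ = S) (X : Matrix ι κ ℝ) :
    (S * X)ᵀ * (S * X) = Xᵀ * (S * S) * X := by
  simp only [transpose_mul, hS, Matrix.mul_assoc]

lemma transpose_mul_conj_mul_of_transpose_eq {S : Matrix ι ι ℝ} (hS : Sᵀ = S)
    (X : Matrix ι κ ℝ) (V : Matrix ι ι ℝ) :
    (S * X)ᵀ * (S * V * S) * (S * X) = Xᵀ * (S * S * V * (S * S)) * X := by
  simp only [transpose_mul, hS, Matrix.mul_assoc]

end LinearAlgebra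

lemma wLoss_sub_wLoss {p : ℕ} {Wm : Matrix (Fin p × Fin p) (Fin p × Fin p) ℝ} (hW : Wmᵀ = Wm)
    (y₀ y c : Fin p × Fin p → ℝ) :
    wLoss Wm y₀ c - wLoss Wm y c
      = y₀ ⬝ᵥ Wm *ᵥ y₀ - y ⬝ᵥ Wm *ᵥ y - 2 * ((y₀ - y) ⬝ᵥ Wm *ᵥ c) := by
  simp only [wLoss, mulVec_sub, sub_dotProduct, dotProduct_sub, dotProduct_mulVec_comm hW c]
  ring

section HatMatrix

variable {p K n : ℕ}
  (W : (Fin K → Matrix (Fin p) (Fin p) ℝ) → Matrix (Fin p × Fin p) (Fin p × Fin p) ℝ)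
  (x : Fin n → (Fin K → Matrix (Fin p) (Fin p) ℝ))

def wlsHatBlock (i j : Fin n) : Matrix (Fin p × Fin p) (Fin p × Fin p) ℝ :=
  designM (x i) * (∑ k, (designM (x k))ᵀ * W (x k) * designM (x k))⁻¹
    * ((designM (x j))ᵀ * W (x j))

lemma designM_mulVec_betaWLS (y : Fin n → Fin p → ℝ) (i : Fin n) :
    designM (x i) *ᵥ betaWLS W x y = ∑ j, wlsHatBlock W x i j *ᵥ vecOuter (y j) := by
  simp only [betaWLS, wlsHatBlock, mulVec_sum, mulVec_mulVec, Matrix.mul_assoc]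

lemma trace_inv_mul_sum_eq_sum_trace_wlsHatBlock
    (V : Fin n → Matrix (Fin p × Fin p) (Fin p × Fin p) ℝ) :
    trace ((∑ i, (designM (x i))ᵀ * W (x i) * designM (x i))⁻¹
        * ∑ i, (designM (x i))ᵀ * (W (x i) * V i * W (x i)) * designM (x i))
      = ∑ i, trace (W (x i) * wlsHatBlock W x i i * V i) := by
  rw [Matrix.mul_sum, trace_sum]
  refine Finset.sum_congr rfl fun i _ => ?_
  set M := ∑ i, (designM (x i))ᵀ * W (x i) * designM (x i)
  calc trace (M⁻¹ * ((designM (x i))ᵀ * (W (x i) * V i * W (x i)) * designM (x i)))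
      = trace ((M⁻¹ * (designM (x i))ᵀ * W (x i) * V i) * (W (x i) * designM (x i))) := by
        simp only [Matrix.mul_assoc]
    _ = trace ((W (x i) * designM (x i)) * (M⁻¹ * (designM (x i))ᵀ * W (x i) * V i)) :=
        trace_mul_comm _ _
    _ = trace (W (x i) * wlsHatBlock W x i i * V i) := by
        simp only [wlsHatBlock, M, Matrix.mul_assoc]

end HatMatrix

section Moments

variable {Ω : Type*} [MeasurableSpace Ω] {μ : Measure Ω} {ι κ : Type*}

def covMatrix (μ : Measure Ω) (u : Ω → ι → ℝ) (v : Ω → κ → ℝ) : Matrix ι κ ℝ :=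
  Matrix.of fun a b => covVal μ (u · a) (v · b)

lemma covVal_eq_covariance (f g : Ω → ℝ) : covVal μ f g = cov[f, g; μ] := rfl

lemma covMatrix_eq_zero_of_indepFun {u : Ω → ι → ℝ} {v : Ω → κ → ℝ} (h : IndepFun u v μ)
    (hu : ∀ a, MemLp (u · a) 2 μ) (hv : ∀ b, MemLp (v · b) 2 μ) : covMatrix μ u v = 0 := by
  ext a b
  exact (h.comp (measurable_pi_apply a) (measurable_pi_apply b)).covariance_eq_zero (hu a) (hv b)

lemma ProbabilityTheory.IdentDistrib.memLp_apply {q : ENNReal} {u v : Ω → ι → ℝ}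
    (h : IdentDistrib u v μ μ) (hv : ∀ a, MemLp (v · a) q μ) (a : ι) : MemLp (u · a) q μ :=
  (h.comp (measurable_pi_apply a)).memLp_iff.mpr (hv a)

lemma memLp_mulVec_apply [Fintype κ] {q : ENNReal} {u : Ω → κ → ℝ}
    (hu : ∀ b, MemLp (u · b) q μ) (A : Matrix ι κ ℝ) (a : ι) :
    MemLp (fun ω => (A *ᵥ u ω) a) q μ :=
  memLp_finsetSum _ fun b _ => (hu b).const_mul (A a b)

lemma memLp_sum_mulVec_apply [Fintype κ] {J : Type*} [Fintype J] {q : ENNReal}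
    {y : J → Ω → κ → ℝ} (hy : ∀ j b, MemLp (y j · b) q μ) (B : J → Matrix ι κ ℝ) (a : ι) :
    MemLp (fun ω => (∑ j, B j *ᵥ y j ω) a) q μ := by
  simp only [Finset.sum_apply]
  exact memLp_finsetSum _ fun j _ => memLp_mulVec_apply (hy j) (B j) a

lemma integrable_dotProduct_mulVec [Fintype ι] [Fintype κ] {u : Ω → ι → ℝ} {v : Ω → κ → ℝ}
    (hu : ∀ a, MemLp (u · a) 2 μ) (hv : ∀ b, MemLp (v · b) 2 μ) (A : Matrix ι κ ℝ) :
    Integrable (fun ω => u ω ⬝ᵥ A *ᵥ v ω) μ :=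
  integrable_finsetSum _ fun a _ => (hu a).integrable_mul (memLp_mulVec_apply hv A a)

lemma integrable_wLoss {p : ℕ} (Wm : Matrix (Fin p × Fin p) (Fin p × Fin p) ℝ)
    {y c : Ω → Fin p × Fin p → ℝ} (hy : ∀ a, MemLp (y · a) 2 μ) (hc : ∀ a, MemLp (c · a) 2 μ) :
    Integrable (fun ω => wLoss Wm (y ω) (c ω)) μ :=
  integrable_dotProduct_mulVec (fun a => (hy a).sub (hc a)) (fun a => (hy a).sub (hc a)) Wm

variable [IsProbabilityMeasure μ] [Fintype ι] [Fintype κ]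

lemma integral_dotProduct_mulVec {u : Ω → ι → ℝ} {v : Ω → κ → ℝ}
    (hu : ∀ a, MemLp (u · a) 2 μ) (hv : ∀ b, MemLp (v · b) 2 μ) (A : Matrix ι κ ℝ) :
    ∫ ω, u ω ⬝ᵥ A *ᵥ v ω ∂μ
      = (fun a => ∫ ω, u ω a ∂μ) ⬝ᵥ A *ᵥ (fun b => ∫ ω, v ω b ∂μ)
        + trace (A * covMatrix μ v u) := by
  have hmoment : ∀ a b, ∫ ω, u ω a * v ω b ∂μ
      = (∫ ω, u ω a ∂μ) * (∫ ω, v ω b ∂μ) + covVal μ (v · b) (u · a) := fun a b => by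
    rw [covVal_eq_covariance, covariance_comm, covariance_eq_sub (hu a) (hv b)]
    simp only [Pi.mul_apply]
    ring
  calc ∫ ω, u ω ⬝ᵥ A *ᵥ v ω ∂μ = ∫ ω, ∑ a, ∑ b, A a b * (u ω a * v ω b) ∂μ := by
        congr with ω
        simp only [dotProduct, mulVec, Finset.mul_sum]
        exact Finset.sum_congr rfl fun a _ => Finset.sum_congr rfl fun b _ => by ring
    _ = ∑ a, ∑ b, A a b * ∫ ω, u ω a * v ω b ∂μ := by
        have hint : ∀ a b, Integrable (fun ω => A a b * (u ω a * v ω b)) μ :=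
          fun a b => ((hu a).integrable_mul (hv b)).const_mul _
        rw [integral_finsetSum _ fun a _ => integrable_finsetSum _ fun b _ => hint a b]
        refine Finset.sum_congr rfl fun a _ => ?_
        rw [integral_finsetSum _ fun b _ => hint a b]
        simp only [integral_const_mul]
    _ = _ := by
        simp only [hmoment, mul_add, Finset.sum_add_distrib, dotProduct, mulVec, trace, diag,
          mul_apply, covMatrix, of_apply, Finset.mul_sum]
        congr 1
        exact Finset.sum_congr rfl fun a _ => Finset.sum_congr rfl fun b _ => by ring

lemma ProbabilityTheory.IdentDistrib.integral_dotProduct_mulVec_sub {y₀ y : Ω → ι → ℝ}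
    {v : Ω → κ → ℝ} (hid : IdentDistrib y₀ y μ μ) (hind : IndepFun y₀ v μ)
    (hy : ∀ a, MemLp (y · a) 2 μ) (hv : ∀ b, MemLp (v · b) 2 μ) (A : Matrix ι κ ℝ) :
    ∫ ω, y₀ ω ⬝ᵥ A *ᵥ v ω ∂μ - ∫ ω, y ω ⬝ᵥ A *ᵥ v ω ∂μ = -trace (A * covMatrix μ v y) := by
  have hy₀ : ∀ a, MemLp (y₀ · a) 2 μ := hid.memLp_apply hy
  have hmean : (fun a => ∫ ω, y₀ ω a ∂μ) = fun a => ∫ ω, y ω a ∂μ :=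
    funext fun a => (hid.comp (measurable_pi_apply a)).integral_eq
  rw [integral_dotProduct_mulVec hy₀ hv, integral_dotProduct_mulVec hy hv, hmean,
    covMatrix_eq_zero_of_indepFun hind.symm hv hy₀, Matrix.mul_zero, trace_zero]
  ring

end Moments

section Blocks

variable {Ω A B β : Type*} [MeasurableSpace Ω] [MeasurableSpace β] {μ : Measure Ω} [Fintype B]
  {f : A → Ω → B → β}

lemma ProbabilityTheory.iIndepFun.indepFun_curry
    (h : iIndepFun (fun (q : A × B) ω => f q.1 ω q.2) μ) (hf : ∀ a b, Measurable (f a · b))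
    {a a' : A} (ha : a ≠ a') : IndepFun (f a) (f a') μ := by
  have hdisj : Disjoint ({a} ×ˢ Finset.univ : Finset (A × B)) ({a'} ×ˢ Finset.univ) := by
    simp [Finset.disjoint_left, ha.symm]
  exact (h.indepFun_finset _ _ hdisj fun q => hf q.1 q.2).comp
    (φ := fun v b => v ⟨(a, b), by simp⟩) (ψ := fun v b => v ⟨(a', b), by simp⟩)
    (measurable_pi_lambda _ fun _ => measurable_pi_apply _)
    (measurable_pi_lambda _ fun _ => measurable_pi_apply _)

lemma ProbabilityTheory.iIndepFun.identDistrib_curry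
    (h : iIndepFun (fun (q : A × B) ω => f q.1 ω q.2) μ) (hf : ∀ a b, Measurable (f a · b))
    {a a' : A} (hid : ∀ b, IdentDistrib (f a · b) (f a' · b) μ μ) :
    IdentDistrib (f a) (f a') μ μ where
  aemeasurable_fst := (measurable_pi_lambda _ (hf a)).aemeasurable
  aemeasurable_snd := (measurable_pi_lambda _ (hf a')).aemeasurable
  map_eq := by
    have hrow : ∀ a, iIndepFun (fun b ω => f a ω b) μ := fun a => by
      simpa using iIndepFun.precomp (Prod.mk_right_injective a) h
    rw [iIndepFun.map_fun_eq_pi_map (fun b => (hf a b).aemeasurable) (hrow a),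
      iIndepFun.map_fun_eq_pi_map (fun b => (hf a' b).aemeasurable) (hrow a')]
    simp only [(hid _).map_eq]

end Blocks

section Optimism

variable {Ω : Type*} [MeasurableSpace Ω] {μ : Measure Ω} {J : Type*} [Fintype J] {p : ℕ}

lemma integral_wLoss_sub_integral_wLoss_eq {Wm : Matrix (Fin p × Fin p) (Fin p × Fin p) ℝ}
    (hW : Wmᵀ = Wm) {y₀ y₁ : Ω → Fin p × Fin p → ℝ} {y : J → Ω → Fin p × Fin p → ℝ}
    (hy₀ : ∀ a, MemLp (y₀ · a) 2 μ) (hy₁ : ∀ a, MemLp (y₁ · a) 2 μ)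
    (hy : ∀ j a, MemLp (y j · a) 2 μ) (B : J → Matrix (Fin p × Fin p) (Fin p × Fin p) ℝ) :
    ∫ ω, wLoss Wm (y₀ ω) (∑ j, B j *ᵥ y j ω) ∂μ - ∫ ω, wLoss Wm (y₁ ω) (∑ j, B j *ᵥ y j ω) ∂μ
      = (∫ ω, y₀ ω ⬝ᵥ Wm *ᵥ y₀ ω ∂μ - ∫ ω, y₁ ω ⬝ᵥ Wm *ᵥ y₁ ω ∂μ)
        - 2 * ∑ j, (∫ ω, y₀ ω ⬝ᵥ (Wm * B j) *ᵥ y j ω ∂μ - ∫ ω, y₁ ω ⬝ᵥ (Wm * B j) *ᵥ y j ω ∂μ) := by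
  have hfit : ∀ a, MemLp (fun ω => (∑ j, B j *ᵥ y j ω) a) 2 μ := memLp_sum_mulVec_apply hy B
  have hQ : ∀ u : Ω → Fin p × Fin p → ℝ, (∀ a, MemLp (u · a) 2 μ) →
      Integrable (fun ω => u ω ⬝ᵥ Wm *ᵥ u ω) μ :=
    fun u hu => integrable_dotProduct_mulVec hu hu Wm
  have hF : ∀ u : Ω → Fin p × Fin p → ℝ, (∀ a, MemLp (u · a) 2 μ) → ∀ j,
      Integrable (fun ω => u ω ⬝ᵥ (Wm * B j) *ᵥ y j ω) μ :=
    fun u hu j => integrable_dotProduct_mulVec hu (hy j) _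
  have hFdiff : ∀ j, Integrable
      (fun ω => y₀ ω ⬝ᵥ (Wm * B j) *ᵥ y j ω - y₁ ω ⬝ᵥ (Wm * B j) *ᵥ y j ω) μ :=
    fun j => (hF y₀ hy₀ j).sub (hF y₁ hy₁ j)
  rw [← integral_sub (integrable_wLoss Wm hy₀ hfit) (integrable_wLoss Wm hy₁ hfit)]
  simp only [wLoss_sub_wLoss hW, sub_dotProduct_mulVec_sum]
  rw [integral_sub, integral_sub (hQ y₀ hy₀) (hQ y₁ hy₁), integral_const_mul,
    integral_finsetSum _ fun j _ => hFdiff j]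
  · simp only [fun j => integral_sub (hF y₀ hy₀ j) (hF y₁ hy₁ j)]
  · exact (hQ y₀ hy₀).sub (hQ y₁ hy₁)
  · exact (integrable_finsetSum _ fun j _ => hFdiff j).const_mul 2

variable [IsProbabilityMeasure μ]

lemma integral_wLoss_sub_integral_wLoss {Wm : Matrix (Fin p × Fin p) (Fin p × Fin p) ℝ}
    (hW : Wmᵀ = Wm) {y₀ : Ω → Fin p × Fin p → ℝ} {y : J → Ω → Fin p × Fin p → ℝ} {i : J}
    (hid : IdentDistrib y₀ (y i) μ μ) (hind₀ : ∀ j, IndepFun y₀ (y j) μ)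
    (hind : ∀ j ≠ i, IndepFun (y j) (y i) μ) (hy : ∀ j a, MemLp (y j · a) 2 μ)
    (B : J → Matrix (Fin p × Fin p) (Fin p × Fin p) ℝ) :
    ∫ ω, wLoss Wm (y₀ ω) (∑ j, B j *ᵥ y j ω) ∂μ - ∫ ω, wLoss Wm (y i ω) (∑ j, B j *ᵥ y j ω) ∂μ
      = 2 * trace (Wm * B i * covMatrix μ (y i) (y i)) := by
  have hquad : ∫ ω, y₀ ω ⬝ᵥ Wm *ᵥ y₀ ω ∂μ = ∫ ω, y i ω ⬝ᵥ Wm *ᵥ y i ω ∂μ :=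
    (hid.comp (by fun_prop : Measurable fun v : Fin p × Fin p → ℝ => v ⬝ᵥ Wm *ᵥ v)).integral_eq
  have hcross : ∀ j, ∫ ω, y₀ ω ⬝ᵥ (Wm * B j) *ᵥ y j ω ∂μ - ∫ ω, y i ω ⬝ᵥ (Wm * B j) *ᵥ y j ω ∂μ
      = -trace (Wm * B j * covMatrix μ (y j) (y i)) :=
    fun j => hid.integral_dotProduct_mulVec_sub (hind₀ j) (hy i) (hy j) _
  have hcov : ∀ j ≠ i, covMatrix μ (y j) (y i) = 0 :=
    fun j hj => covMatrix_eq_zero_of_indepFun (hind j hj) (hy j) (hy i)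
  rw [integral_wLoss_sub_integral_wLoss_eq hW (hid.memLp_apply (hy i)) (hy i) hy B, hquad,
    sub_self, zero_sub]
  simp only [hcross, Finset.sum_neg_distrib]
  rw [Finset.sum_eq_single i (fun j _ hj => by rw [hcov j hj, Matrix.mul_zero, trace_zero])
    (by simp)]
  ring

lemma integral_sum_wLoss_sub_integral_sum_wLoss
    {Wm : J → Matrix (Fin p × Fin p) (Fin p × Fin p) ℝ} (hW : ∀ i, (Wm i)ᵀ = Wm i)
    {y₀ y : J → Ω → Fin p × Fin p → ℝ} (hid : ∀ i, IdentDistrib (y₀ i) (y i) μ μ)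
    (hind₀ : ∀ i j, IndepFun (y₀ i) (y j) μ) (hind : Pairwise fun i j => IndepFun (y i) (y j) μ)
    (hy : ∀ j a, MemLp (y j · a) 2 μ) (H : J → J → Matrix (Fin p × Fin p) (Fin p × Fin p) ℝ) :
    ∫ ω, ∑ i, wLoss (Wm i) (y₀ i ω) (∑ j, H i j *ᵥ y j ω) ∂μ
        - ∫ ω, ∑ i, wLoss (Wm i) (y i ω) (∑ j, H i j *ᵥ y j ω) ∂μ
      = 2 * ∑ i, trace (Wm i * H i i * covMatrix μ (y i) (y i)) := by
  have hfit : ∀ i a, MemLp (fun ω => (∑ j, H i j *ᵥ y j ω) a) 2 μ :=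
    fun i => memLp_sum_mulVec_apply hy (H i)
  rw [integral_finsetSum _ fun i _ => integrable_wLoss _ ((hid i).memLp_apply (hy i)) (hfit i),
    integral_finsetSum _ fun i _ => integrable_wLoss _ (hy i) (hfit i), ← Finset.sum_sub_distrib,
    Finset.mul_sum]
  exact Finset.sum_congr rfl fun i _ => integral_wLoss_sub_integral_wLoss (hW i) (hid i)
    (hind₀ i) (fun j hj => hind hj) hy (H i)

end Optimism

theorem fixedX_optimism_linear_WLS_general
    -- probability space
    {Ω : Type*} [MeasurableSpace Ω] (μ : Measure Ω) [IsProbabilityMeasure μ]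
    -- dimensions and the fixed design `x₁, …, xₙ`, each `xᵢ` a K-tuple of p×p matrices
    (n p K : ℕ)
    (x : Fin n → (Fin K → Matrix (Fin p) (Fin p) ℝ))
    -- the true covariance function `C(·)` (possibly not of the fitted linear form) and
    -- its symmetric square root `C^{1/2}(·)`
    (Csqrt : (Fin K → Matrix (Fin p) (Fin p) ℝ) → Matrix (Fin p) (Fin p) ℝ)
    -- the weight matrices `W(·)` (positive semidefinite) and their symmetric square roots
    (W Wsqrt : (Fin K → Matrix (Fin p) (Fin p) ℝ) → Matrix (Fin p × Fin p) (Fin p × Fin p) ℝ)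
    (hWsqrt : ∀ t, (Wsqrt t).IsSymm ∧ Wsqrt t * Wsqrt t = W t)
    -- Assumption 6: the errors for the training (`inl`) and test (`inr`) responses;
    -- entries i.i.d. in both indices, mean 0, variance 1, fourth moment μ⁴ and finite
    -- (4+η₁)-th absolute moment
    (ε : (Fin n ⊕ Fin n) → Ω → Fin p → ℝ)
    (hεmeas : ∀ α j, Measurable fun ω => ε α ω j)
    (hεindep : iIndepFun
      (fun (q : (Fin n ⊕ Fin n) × Fin p) ω => ε q.1 ω q.2) μ)
    (hεident : ∀ q q' : (Fin n ⊕ Fin n) × Fin p,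
      IdentDistrib (fun ω => ε q.1 ω q.2) (fun ω => ε q'.1 ω q'.2) μ μ)
    -- Assumption 6: data generating process for training and test responses
    (Y Y0 : Fin n → Ω → Fin p → ℝ)
    (hY : ∀ i ω, Y i ω = (Csqrt (x i)).mulVec (ε (Sum.inl i) ω))
    (hY0 : ∀ i ω, Y0 i ω = (Csqrt (x i)).mulVec (ε (Sum.inr i) ω))
    -- fourth moments of the responses are finite
    (hYL2 : ∀ i ab, MemLp (fun ω => vecOuter (Y i ω) ab) 2 μ) :
    -- OptF = ErrF − E[Tr(𝕏,𝕐)] = (2/n) tr{(x̃ᵀx̃)⁻¹ x̃ᵀ Ṽ(x) x̃},  the fit being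
    -- `Ĉ(x) = 𝐱 β̂_WLS` and `Ṽ(x)` the block-diagonal matrix of the
    -- `W^{1/2}(xᵢ) 𝐕(xᵢ) W^{1/2}(xᵢ)` with `𝐕(xᵢ) = Cov(𝐘ᵢ)`
    (∫ ω, (1 / (n:ℝ)) * ∑ i, wLoss (W (x i)) (vecOuter (Y0 i ω))
        ((designM (x i)).mulVec (betaWLS W x (fun j => Y j ω))) ∂μ)
    - (∫ ω, (1 / (n:ℝ)) * ∑ i, wLoss (W (x i)) (vecOuter (Y i ω))
        ((designM (x i)).mulVec (betaWLS W x (fun j => Y j ω))) ∂μ)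
      =
    (2 / (n:ℝ)) * Matrix.trace
      ((∑ i, (Wsqrt (x i) * designM (x i))ᵀ * (Wsqrt (x i) * designM (x i)))⁻¹
        * (∑ i, (Wsqrt (x i) * designM (x i))ᵀ
            * (Wsqrt (x i)
                * Matrix.of (fun ab cd => covVal μ (fun ω => vecOuter (Y i ω) ab)
                    (fun ω => vecOuter (Y i ω) cd))
                * Wsqrt (x i))
            * (Wsqrt (x i) * designM (x i)))) := by
  obtain rfl : Y = fun i ω => Csqrt (x i) *ᵥ ε (.inl i) ω := funext₂ hY
  obtain rfl : Y0 = fun i ω => Csqrt (x i) *ᵥ ε (.inr i) ω := funext₂ hY0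
  have hWsymm : ∀ t, (W t)ᵀ = W t := fun t => by
    rw [← (hWsqrt t).2, transpose_mul, (hWsqrt t).1.eq]
  have hresp : ∀ t, Measurable fun e : Fin p → ℝ => vecOuter (Csqrt t *ᵥ e) := fun t => by
    unfold vecOuter; fun_prop
  have hind : ∀ α β, α ≠ β → ∀ t t', IndepFun (fun ω => vecOuter (Csqrt t *ᵥ ε α ω))
      (fun ω => vecOuter (Csqrt t' *ᵥ ε β ω)) μ :=
    fun α β h t t' => (hεindep.indepFun_curry hεmeas h).comp (hresp t) (hresp t')
  have hid : ∀ i, IdentDistrib (fun ω => vecOuter (Csqrt (x i) *ᵥ ε (.inr i) ω))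
      (fun ω => vecOuter (Csqrt (x i) *ᵥ ε (.inl i) ω)) μ μ := fun i =>
    (hεindep.identDistrib_curry hεmeas fun j => hεident (.inr i, j) (.inl i, j)).comp (hresp _)
  simp only [designM_mulVec_betaWLS]
  rw [integral_const_mul, integral_const_mul, ← mul_sub,
    integral_sum_wLoss_sub_integral_sum_wLoss (fun i => hWsymm (x i)) hid
      (fun i j => hind _ _ Sum.inr_ne_inl _ _) (fun i j hij => hind _ _ (by simpa using hij) _ _)
      hYL2]
  simp only [transpose_mul_self_of_transpose_eq (hWsqrt _).1.eq,
    transpose_mul_conj_mul_of_transpose_eq (hWsqrt _).1.eq, (hWsqrt _).2]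
  rw [trace_inv_mul_sum_eq_sum_trace_wlsHatBlock]
  unfold covMatrix
  ring

theorem fixedX_optimism_linear_WLS
    -- probability space
    {Ω : Type*} [MeasurableSpace Ω] (μ : Measure Ω) [IsProbabilityMeasure μ]
    -- dimensions and the fixed design `x₁, …, xₙ`, each `xᵢ` a K-tuple of p×p matrices
    (n p K : ℕ) (hn : 0 < n)
    (x : Fin n → (Fin K → Matrix (Fin p) (Fin p) ℝ))
    -- the true covariance function `C(·)` (possibly not of the fitted linear form) and
    -- its symmetric square root `C^{1/2}(·)`
    (C Csqrt : (Fin K → Matrix (Fin p) (Fin p) ℝ) → Matrix (Fin p) (Fin p) ℝ)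
    (hCsqrt : ∀ t, (Csqrt t).IsSymm ∧ Csqrt t * Csqrt t = C t)
    -- the weight matrices `W(·)` (positive semidefinite) and their symmetric square roots
    (W Wsqrt : (Fin K → Matrix (Fin p) (Fin p) ℝ) → Matrix (Fin p × Fin p) (Fin p × Fin p) ℝ)
    (hWpsd : ∀ t, (W t).PosSemidef)
    (hWsqrt : ∀ t, (Wsqrt t).IsSymm ∧ Wsqrt t * Wsqrt t = W t)
    -- Assumption 6: the errors for the training (`inl`) and test (`inr`) responses;
    -- entries i.i.d. in both indices, mean 0, variance 1, fourth moment μ⁴ and finite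
    -- (4+η₁)-th absolute moment
    (ε : (Fin n ⊕ Fin n) → Ω → Fin p → ℝ)
    (hεmeas : ∀ α j, Measurable fun ω => ε α ω j)
    (hεindep : iIndepFun
      (fun (q : (Fin n ⊕ Fin n) × Fin p) ω => ε q.1 ω q.2) μ)
    (hεident : ∀ q q' : (Fin n ⊕ Fin n) × Fin p,
      IdentDistrib (fun ω => ε q.1 ω q.2) (fun ω => ε q'.1 ω q'.2) μ μ)
    (hεmean : ∀ α j, ∫ ω, ε α ω j ∂μ = 0)
    (hεvar : ∀ α j, ∫ ω, (ε α ω j) ^ 2 ∂μ = 1)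
    (μ4 : ℝ) (hεmom4 : ∀ α j, ∫ ω, (ε α ω j) ^ 4 ∂μ = μ4)
    (hεmom : ∃ η₁ > (0:ℝ), ∀ α j, Integrable (fun ω => |ε α ω j| ^ (4 + η₁)) μ)
    -- Assumption 6: data generating process for training and test responses
    (Y Y0 : Fin n → Ω → Fin p → ℝ)
    (hY : ∀ i ω, Y i ω = (Csqrt (x i)).mulVec (ε (Sum.inl i) ω))
    (hY0 : ∀ i ω, Y0 i ω = (Csqrt (x i)).mulVec (ε (Sum.inr i) ω))
    -- fourth moments of the responses are finite
    (hYL2 : ∀ i ab, MemLp (fun ω => vecOuter (Y i ω) ab) 2 μ)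
    (hY0L2 : ∀ i ab, MemLp (fun ω => vecOuter (Y0 i ω) ab) 2 μ)
    -- `x̃ᵀx̃ = Σᵢ x̃ᵢᵀx̃ᵢ` is invertible, where `x̃ᵢ = W^{1/2}(xᵢ)𝐱ᵢ`
    (hinv : IsUnit (∑ i, (Wsqrt (x i) * designM (x i))ᵀ * (Wsqrt (x i) * designM (x i))).det) :
    -- OptF = ErrF − E[Tr(𝕏,𝕐)] = (2/n) tr{(x̃ᵀx̃)⁻¹ x̃ᵀ Ṽ(x) x̃},  the fit being
    -- `Ĉ(x) = 𝐱 β̂_WLS` and `Ṽ(x)` the block-diagonal matrix of the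
    -- `W^{1/2}(xᵢ) 𝐕(xᵢ) W^{1/2}(xᵢ)` with `𝐕(xᵢ) = Cov(𝐘ᵢ)`
    (∫ ω, (1 / (n:ℝ)) * ∑ i, wLoss (W (x i)) (vecOuter (Y0 i ω))
        ((designM (x i)).mulVec (betaWLS W x (fun j => Y j ω))) ∂μ)
    - (∫ ω, (1 / (n:ℝ)) * ∑ i, wLoss (W (x i)) (vecOuter (Y i ω))
        ((designM (x i)).mulVec (betaWLS W x (fun j => Y j ω))) ∂μ)
      =
    (2 / (n:ℝ)) * Matrix.trace
      ((∑ i, (Wsqrt (x i) * designM (x i))ᵀ * (Wsqrt (x i) * designM (x i)))⁻¹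
        * (∑ i, (Wsqrt (x i) * designM (x i))ᵀ
            * (Wsqrt (x i)
                * Matrix.of (fun ab cd => covVal μ (fun ω => vecOuter (Y i ω) ab)
                    (fun ω => vecOuter (Y i ω) cd))
                * Wsqrt (x i))
            * (Wsqrt (x i) * designM (x i)))) :=
  fixedX_optimism_linear_WLS_general μ n p K x Csqrt W Wsqrt hWsqrt ε hεmeas hεindep hεident Y Y0 hY
    hY0 hYL2
end
end
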